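/- arXiv:1512.04194 — 2 statements merged into one kernel-verified Lean document; each statement's English description precedes it below -/
import Mathlib

section
/- Let B be an infinitesimal symplectic 2n×2n real matrix, and let N = F(B) + G(B) and D = F(B) - G(B), where F is an even polynomial and G is an odd polynomial. Then Nᵀ J N = Dᵀ J D. -/
open Matrix Polynomial

noncomputable def J (n : ℕ) : Matrix (Fin n ⊕ Fin n) (Fin n ⊕ Fin n) ℝ :=
  Matrix.fromBlocks 0 1 (-1) 0

theorem pade_NJN_eq_DJD (n : ℕ) (F G : Polynomial ℝ)
    (hF : ∀ i, Odd i → F.coeff i = 0)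
    (hG : ∀ i, Even i → G.coeff i = 0)
    (B : Matrix (Fin n ⊕ Fin n) (Fin n ⊕ Fin n) ℝ)
    (hB : J n * B + Bᵀ * J n = 0) :
    (Polynomial.aeval B F + Polynomial.aeval B G)ᵀ * J n *
      (Polynomial.aeval B F + Polynomial.aeval B G) =
    (Polynomial.aeval B F - Polynomial.aeval B G)ᵀ * J n *
      (Polynomial.aeval B F - Polynomial.aeval B G) := by
  have hBJ : Bᵀ * J n = J n * (-B) := by
    rw [Matrix.mul_neg, eq_neg_iff_add_eq_zero, add_comm]; exact hB
  have hpow : ∀ k : ℕ, (Bᵀ) ^ k * J n = J n * (-B) ^ k := by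
    intro k
    induction k with
    | zero => simp
    | succ k ih =>
      rw [pow_succ', pow_succ', mul_assoc, ih, ← mul_assoc, hBJ, mul_assoc]
  have key : ∀ p : Polynomial ℝ, (aeval Bᵀ p) * J n = J n * aeval (-B) p := by
    intro p
    induction p using Polynomial.induction_on' with
    | add p q hp hq => simp [map_add, add_mul, mul_add, hp, hq]
    | monomial k c =>
      simp only [aeval_monomial]
      rw [mul_assoc, hpow k, ← mul_assoc, Algebra.commutes c (J n), mul_assoc]
  have htr : ∀ p : Polynomial ℝ, (aeval B p)ᵀ = aeval Bᵀ p := by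
    intro p
    induction p using Polynomial.induction_on' with
    | add p q hp hq => simp [hp, hq]
    | monomial k c => simp [aeval_monomial, transpose_mul, transpose_pow,
        Algebra.algebraMap_eq_smul_one, Algebra.commutes c ((Bᵀ) ^ k)]
  have hFeven : aeval (-B) F = aeval B F := by
    rw [aeval_eq_sum_range, aeval_eq_sum_range]
    refine Finset.sum_congr rfl fun k _ => ?_
    rcases Nat.even_or_odd k with hk | hk
    · rw [hk.neg_pow]
    · simp [hF k hk]
  have hGodd : aeval (-B) G = -aeval B G := by
    rw [aeval_eq_sum_range, aeval_eq_sum_range, ← Finset.sum_neg_distrib]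
    refine Finset.sum_congr rfl fun k _ => ?_
    rcases Nat.even_or_odd k with hk | hk
    · simp [hG k hk]
    · rw [hk.neg_pow]; simp
  set Fb := aeval B F
  set Gb := aeval B G
  have hcomm : Fb * Gb = Gb * Fb := by
    rw [← _root_.map_mul, ← _root_.map_mul, mul_comm]
  have hN : (Fb + Gb)ᵀ * J n = J n * (Fb - Gb) := by
    rw [transpose_add, htr F, htr G, ← map_add, key, map_add, hFeven, hGodd, ← sub_eq_add_neg]
  have hD : (Fb - Gb)ᵀ * J n = J n * (Fb + Gb) := by
    rw [transpose_sub, htr F, htr G, ← map_sub, key, map_sub, hFeven, hGodd, sub_neg_eq_add]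
  rw [hN, hD, mul_assoc, mul_assoc]
  congr 1
  rw [sub_mul, mul_add, mul_add, add_mul, mul_sub, mul_sub, hcomm]
  abel
end

section
/- Let B be an infinitesimal symplectic 2n×2n real matrix and k ≥ 1. Define the diagonal Padé numerator N_{(k,k)}(B) = ∑_{i=0}^{k} [(2k-i)! k! / ((2k)! i! (k-i)!)] B^i and denominator D_{(k,k)}(B) = ∑_{i=0}^{k} [(2k-i)! k! / ((2k)! i! (k-i)!)] (-B)^i. If D_{(k,k)}(B) is invertible, then the matrix P = D_{(k,k)}(B)⁻¹ N_{(k,k)}(B) is symplectic, i.e., Pᵀ J P = J. -/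
open Matrix Finset

noncomputable def padeCoeff (k i : ℕ) : ℝ :=
  ((Nat.factorial (2 * k - i) * Nat.factorial k : ℕ) : ℝ) /
    ((Nat.factorial (2 * k) * Nat.factorial i * Nat.factorial (k - i) : ℕ) : ℝ)

noncomputable def padeNum (k : ℕ) {n : ℕ}
    (B : Matrix (Fin n ⊕ Fin n) (Fin n ⊕ Fin n) ℝ) :
    Matrix (Fin n ⊕ Fin n) (Fin n ⊕ Fin n) ℝ :=
  ∑ i ∈ Finset.range (k + 1), padeCoeff k i • B ^ i

noncomputable def padeDen (k : ℕ) {n : ℕ}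
    (B : Matrix (Fin n ⊕ Fin n) (Fin n ⊕ Fin n) ℝ) :
    Matrix (Fin n ⊕ Fin n) (Fin n ⊕ Fin n) ℝ :=
  ∑ i ∈ Finset.range (k + 1), padeCoeff k i • (-B) ^ i

lemma JJ (n : ℕ) : _root_.J n * _root_.J n = -1 := by
  have h1 : (-1 : Matrix (Fin n ⊕ Fin n) (Fin n ⊕ Fin n) ℝ) =
      Matrix.fromBlocks (-1) 0 0 (-1) := by
    ext (i | i) (j | j) <;> simp [Matrix.one_apply]
  rw [h1]
  show Matrix.fromBlocks 0 1 (-1) 0 * Matrix.fromBlocks 0 1 (-1) 0 = _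
  rw [Matrix.fromBlocks_multiply]
  norm_num

lemma pow_transpose (n : ℕ) (B : Matrix (Fin n ⊕ Fin n) (Fin n ⊕ Fin n) ℝ)
    (hB : _root_.J n * B + Bᵀ * _root_.J n = 0) (i : ℕ) :
    (B ^ i)ᵀ = -(_root_.J n * (-B) ^ i * _root_.J n) := by
  have hBT : Bᵀ = _root_.J n * B * _root_.J n := by
    have h1 : Bᵀ * _root_.J n = -(_root_.J n * B) := by
      linear_combination (norm := noncomm_ring) hB
    calc Bᵀ = -(Bᵀ * (_root_.J n * _root_.J n)) := by rw [JJ]; noncomm_ring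
    _ = -((Bᵀ * _root_.J n) * _root_.J n) := by noncomm_ring
    _ = _root_.J n * B * _root_.J n := by rw [h1]; noncomm_ring
  induction i with
  | zero => simp [JJ n]
  | succ i ih =>
    rw [pow_succ, Matrix.transpose_mul, ih, hBT, pow_succ]
    have hc : B * (-B) ^ i = (-B) ^ i * B := ((Commute.refl B).neg_right.pow_right i).eq
    set C := (-B) ^ i with hC
    calc _root_.J n * B * _root_.J n * -(_root_.J n * C * _root_.J n)
        = -(_root_.J n * B * (_root_.J n * _root_.J n) * (C * _root_.J n)) := by noncomm_ring
      _ = _root_.J n * (B * C) * _root_.J n := by rw [JJ]; noncomm_ring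
      _ = _root_.J n * (C * B) * _root_.J n := by rw [hc]
      _ = -(_root_.J n * (C * -B) * _root_.J n) := by noncomm_ring

theorem diagonal_pade_symplectic (n k : ℕ) (hk : 1 ≤ k)
    (B : Matrix (Fin n ⊕ Fin n) (Fin n ⊕ Fin n) ℝ)
    (hB : J n * B + Bᵀ * J n = 0)
    (hD : IsUnit (padeDen k B).det) :
    ((padeDen k B)⁻¹ * padeNum k B)ᵀ * J n * ((padeDen k B)⁻¹ * padeNum k B) = J n := by
  set D := padeDen k B with hDdef
  set N := padeNum k B with hNdef
  have hBneg : _root_.J n * (-B) + (-B)ᵀ * _root_.J n = 0 := by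
    rw [Matrix.transpose_neg]; linear_combination (norm := noncomm_ring) -hB
  have hNT : Nᵀ = -(_root_.J n * D * _root_.J n) := by
    rw [hNdef, hDdef]
    unfold padeNum padeDen
    rw [Matrix.transpose_sum]
    simp only [Matrix.transpose_smul, pow_transpose n B hB, Finset.mul_sum, Finset.sum_mul,
      Matrix.mul_smul, Matrix.smul_mul, smul_neg, ← Finset.sum_neg_distrib]
  have hDT : Dᵀ = -(_root_.J n * N * _root_.J n) := by
    rw [hNdef, hDdef]
    unfold padeNum padeDen
    rw [Matrix.transpose_sum]
    simp only [Matrix.transpose_smul, pow_transpose n (-B) hBneg, neg_neg, Finset.mul_sum,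
      Finset.sum_mul, Matrix.mul_smul, Matrix.smul_mul, smul_neg, ← Finset.sum_neg_distrib]
  have hcomm : D * N = N * D := by
    have : Commute D N := by
      rw [hDdef, hNdef]
      unfold padeNum padeDen
      apply Commute.sum_left
      intro i _
      apply Commute.sum_right
      intro j _
      exact (((Commute.refl B).neg_left.pow_pow i j).smul_left _).smul_right _
    exact this.eq
  clear_value D N
  have hdetT : IsUnit (Dᵀ).det := by rwa [Matrix.det_transpose]
  have key : Nᵀ * _root_.J n * N = Dᵀ * _root_.J n * D := by
    rw [hNT, hDT]
    calc -(_root_.J n * D * _root_.J n) * _root_.J n * N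
        = -(_root_.J n * D * (_root_.J n * _root_.J n) * N) := by noncomm_ring
      _ = _root_.J n * (D * N) := by rw [JJ]; noncomm_ring
      _ = _root_.J n * (N * D) := by rw [hcomm]
      _ = -(_root_.J n * N * (_root_.J n * _root_.J n) * D) := by rw [JJ]; noncomm_ring
      _ = -(_root_.J n * N * _root_.J n) * _root_.J n * D := by noncomm_ring
  have hcommT : Nᵀ * Dᵀ = Dᵀ * Nᵀ := by
    rw [← Matrix.transpose_mul, ← Matrix.transpose_mul, hcomm]
  have hcommInv : Nᵀ * (Dᵀ)⁻¹ = (Dᵀ)⁻¹ * Nᵀ := by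
    have h1 : (Dᵀ)⁻¹ * (Dᵀ * Nᵀ) * (Dᵀ)⁻¹ = Nᵀ * (Dᵀ)⁻¹ := by
      rw [show (Dᵀ)⁻¹ * (Dᵀ * Nᵀ) * (Dᵀ)⁻¹ = ((Dᵀ)⁻¹ * Dᵀ) * (Nᵀ * (Dᵀ)⁻¹) from by
        noncomm_ring, Matrix.nonsing_inv_mul _ hdetT, one_mul]
    have h2 : (Dᵀ)⁻¹ * (Nᵀ * Dᵀ) * (Dᵀ)⁻¹ = (Dᵀ)⁻¹ * Nᵀ := by
      rw [show (Dᵀ)⁻¹ * (Nᵀ * Dᵀ) * (Dᵀ)⁻¹ = ((Dᵀ)⁻¹ * Nᵀ) * (Dᵀ * (Dᵀ)⁻¹) from by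
        noncomm_ring, Matrix.mul_nonsing_inv _ hdetT, mul_one]
    rw [← h1, ← hcommT, h2]
  have hcommInv2 : N * D⁻¹ = D⁻¹ * N := by
    have h1 : D⁻¹ * (D * N) * D⁻¹ = N * D⁻¹ := by
      rw [show D⁻¹ * (D * N) * D⁻¹ = (D⁻¹ * D) * (N * D⁻¹) from by
        noncomm_ring, Matrix.nonsing_inv_mul _ hD, one_mul]
    have h2 : D⁻¹ * (N * D) * D⁻¹ = D⁻¹ * N := by
      rw [show D⁻¹ * (N * D) * D⁻¹ = (D⁻¹ * N) * (D * D⁻¹) from by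
        noncomm_ring, Matrix.mul_nonsing_inv _ hD, mul_one]
    rw [← h1, hcomm, h2]
  rw [Matrix.transpose_mul, Matrix.transpose_nonsing_inv]
  calc Nᵀ * (Dᵀ)⁻¹ * _root_.J n * (D⁻¹ * N)
      = (Dᵀ)⁻¹ * Nᵀ * _root_.J n * (N * D⁻¹) := by rw [hcommInv, ← hcommInv2]
    _ = (Dᵀ)⁻¹ * (Nᵀ * _root_.J n * N) * D⁻¹ := by noncomm_ring
    _ = (Dᵀ)⁻¹ * (Dᵀ * _root_.J n * D) * D⁻¹ := by rw [key]
    _ = ((Dᵀ)⁻¹ * Dᵀ) * _root_.J n * (D * D⁻¹) := by noncomm_ring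
    _ = _root_.J n := by
        rw [Matrix.nonsing_inv_mul _ hdetT, Matrix.mul_nonsing_inv _ hD, one_mul, mul_one]
end
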